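/- Let K be a field of characteristic zero and let f ∈ K[x] be a polynomial of degree two with f(0) ≠ 0, so that K[x][f^{-1}] embeds into K[[x]]. Let K_f ⊂ K[x][f^{-1}] be the K-linear span of {f^i : i ∈ \mathbb{Z}}, and for A = \sum_i a_i f^i ∈ K_f let Ord(A) be the largest i with a_i ≠ 0. Fix n ≥ 0 and elements A_{lp} ∈ K[x][f^{-1}] for 0 ≤ l ≤ n, p ≥ 0, only finitely many nonzero, of the following form: A_{lp} = B_{lp} if p is odd and A_{lp} = (df/dx)·B_{lp} if p is even, where B_{lp} ∈ K_f satisfy Ord(B_{l0}) ≤ -2 and Ord(B_{lp}) ≤ \lfloor (p-1)/2 \rfloor for p ≥ 1. Then for any sequence (R_m)_{m≥0} in K[[x]] with R_0 = 1 satisfying, for every m ≥ 1, dR_m/dx = \sum_{l=0}^{n} \sum_{p≥0} A_{lp} · (d/dx)^p R_{m-1-l} (with R_j = 0 for j < 0), every R_m lies in the subring K[x][f^{-1}] of K[[x]]. -/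

import Mathlib

/-!
Write `E t = zpowSpan K u t` for the `K`-span of the powers `u ^ j`, `j ≤ t`, and
`O t = derivZpowSpan D u t` for `u' · E t`. Since `u'' ∈ E 0` and `u' ^ 2 ∈ E 1` when `u` is a
quadratic polynomial, differentiation maps `E t` into `O (t - 1)` and `O t` into `E t`, and it
maps `E 0` into `O (-2)`. Hence `(d/dx) ^ p` lowers the order by about `p / 2`, which is exactly
what the bounds on `Ord (B l p)` allow: if `R k ∈ E 0` for all `k < m`, every term of the
recursion for `R m` lies in `O (-2)`. For `j ≤ -2` the generator `u' u ^ j` is the derivative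
of `u ^ (j + 1) / (j + 1)`, so `R m ∈ E (-1) + K ⊆ E 0`, and `E 0` lies in the algebra
generated by `u⁻¹`.
-/

namespace Polynomial

theorem derivative_sq_of_degree_le_two {R : Type*} [CommRing R] {p : R[X]}
    (hp : p.degree ≤ 2) :
    derivative p ^ 2 =
      C (4 * p.coeff 2) * p + C (discrim (p.coeff 2) (p.coeff 1) (p.coeff 0)) := by
  have hq := eq_quadratic_of_degree_le_two hp
  generalize p.coeff 2 = a, p.coeff 1 = b, p.coeff 0 = c at hq ⊢
  subst hq
  simp only [derivative_add, derivative_C_mul_X_pow, derivative_C_mul_X, derivative_C, discrim,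
    Nat.cast_ofNat, map_sub, map_mul, map_pow, map_ofNat]
  ring

theorem derivative_derivative_of_degree_le_two {R : Type*} [CommRing R] {p : R[X]}
    (hp : p.degree ≤ 2) : derivative (derivative p) = C (2 * p.coeff 2) := by
  have hq := eq_quadratic_of_degree_le_two hp
  generalize p.coeff 2 = a, p.coeff 1 = b, p.coeff 0 = c at hq ⊢
  subst hq
  simp only [derivative_add, derivative_C_mul_X_pow, derivative_C_mul_X, derivative_C,
    Nat.cast_ofNat, add_zero]
  norm_num [mul_comm]

end Polynomial

open PowerSeries

theorem Derivation.leibniz_units_zpow {R A M : Type*} [CommRing R] [CommRing A] [Algebra R A]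
    [AddCommGroup M] [Module A M] [Module R M] (D : Derivation R A M) (u : Aˣ) (n : ℤ) :
    D ↑(u ^ n) = n • (↑(u ^ (n - 1)) : A) • D ↑u := by
  have hstep : ∀ k : ℤ,
      D ↑(u ^ (k + 1)) = (↑(u ^ k) : A) • D ↑u + (u : A) • D ↑(u ^ k) := fun k => by
    rw [zpow_add_one, Units.val_mul, D.leibniz, add_comm]
  have hval : ∀ k : ℤ, (u : A) * ↑(u ^ (k - 1)) = ↑(u ^ k) := fun k => by
    rw [← Units.val_mul, ← zpow_one_add, add_sub_cancel]
  induction n using Int.induction_on with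
  | zero => simp
  | succ k ih =>
    rw [hstep, ih, smul_comm (u : A) (k : ℤ), smul_smul, hval, add_sub_cancel_right]
    module
  | pred k ih =>
    have h := hstep (-(k : ℤ) - 1)
    rw [sub_add_cancel, ih] at h
    apply smul_left_cancel u
    rw [Units.smul_def, Units.smul_def, smul_comm (u : A) (_ : ℤ), smul_smul, hval,
      eq_sub_of_add_eq' h.symm]
    module

section ZpowSpan

variable (K : Type*) {A : Type*} [CommRing K] [CommRing A] [Algebra K A]

def zpowSpan (u : Aˣ) (t : ℤ) : Submodule K A :=
  Submodule.span K {g | ∃ j : ℤ, j ≤ t ∧ g = ((u ^ j : Aˣ) : A)}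

variable {K}

def derivZpowSpan (D : Derivation K A A) (u : Aˣ) (t : ℤ) : Submodule K A :=
  Submodule.span K {g | ∃ j : ℤ, j ≤ t ∧ g = D u * ((u ^ j : Aˣ) : A)}

variable (D : Derivation K A A) (u : Aˣ)

theorem val_zpow_mem_zpowSpan {j t : ℤ} (h : j ≤ t) : ((u ^ j : Aˣ) : A) ∈ zpowSpan K u t :=
  Submodule.subset_span ⟨j, h, rfl⟩

theorem one_mem_zpowSpan {t : ℤ} (ht : 0 ≤ t) : (1 : A) ∈ zpowSpan K u t := by
  simpa using val_zpow_mem_zpowSpan (K := K) u ht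

theorem val_mem_zpowSpan {t : ℤ} (ht : 1 ≤ t) : (u : A) ∈ zpowSpan K u t := by
  simpa using val_zpow_mem_zpowSpan (K := K) u ht

theorem deriv_mul_val_zpow_mem_derivZpowSpan {j t : ℤ} (h : j ≤ t) :
    D u * ((u ^ j : Aˣ) : A) ∈ derivZpowSpan D u t :=
  Submodule.subset_span ⟨j, h, rfl⟩

theorem zpowSpan_mono {s t : ℤ} (h : s ≤ t) : zpowSpan K u s ≤ zpowSpan K u t :=
  Submodule.span_mono fun _ ⟨j, hj, hg⟩ => ⟨j, hj.trans h, hg⟩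

theorem derivZpowSpan_mono {s t : ℤ} (h : s ≤ t) :
    derivZpowSpan D u s ≤ derivZpowSpan D u t :=
  Submodule.span_mono fun _ ⟨j, hj, hg⟩ => ⟨j, hj.trans h, hg⟩

theorem mul_mem_zpowSpan {s t : ℤ} {a b : A} (ha : a ∈ zpowSpan K u s)
    (hb : b ∈ zpowSpan K u t) : a * b ∈ zpowSpan K u (s + t) := by
  have hle : zpowSpan K u s * zpowSpan K u t ≤ zpowSpan K u (s + t) := by
    rw [zpowSpan, zpowSpan, Submodule.span_mul_span, Submodule.span_le]
    rintro _ ⟨_, ⟨i, hi, rfl⟩, _, ⟨j, hj, rfl⟩, rfl⟩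
    dsimp only
    rw [← Units.val_mul, ← zpow_add]
    exact val_zpow_mem_zpowSpan u (by omega)
  exact hle (Submodule.mul_mem_mul ha hb)

theorem mul_mem_derivZpowSpan {s t : ℤ} {a b : A} (ha : a ∈ zpowSpan K u s)
    (hb : b ∈ derivZpowSpan D u t) : a * b ∈ derivZpowSpan D u (s + t) := by
  have hle : zpowSpan K u s * derivZpowSpan D u t ≤ derivZpowSpan D u (s + t) := by
    rw [zpowSpan, derivZpowSpan, Submodule.span_mul_span, Submodule.span_le]
    rintro _ ⟨_, ⟨i, hi, rfl⟩, _, ⟨j, hj, rfl⟩, rfl⟩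
    dsimp only
    rw [mul_left_comm, ← Units.val_mul, ← zpow_add]
    exact deriv_mul_val_zpow_mem_derivZpowSpan D u (by omega)
  exact hle (Submodule.mul_mem_mul ha hb)

theorem deriv_mul_mem_derivZpowSpan {t : ℤ} {a : A} (ha : a ∈ zpowSpan K u t) :
    D u * a ∈ derivZpowSpan D u t := by
  have hle : (zpowSpan K u t).map (LinearMap.mulLeft K (D u)) ≤ derivZpowSpan D u t := by
    rw [zpowSpan, Submodule.map_span_le]
    rintro _ ⟨j, hj, rfl⟩
    exact deriv_mul_val_zpow_mem_derivZpowSpan D u hj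
  exact hle ⟨a, ha, rfl⟩

theorem apply_mem_derivZpowSpan {t : ℤ} {a : A} (ha : a ∈ zpowSpan K u t) :
    D a ∈ derivZpowSpan D u (t - 1) := by
  have hle : (zpowSpan K u t).map D.toLinearMap ≤ derivZpowSpan D u (t - 1) := by
    rw [zpowSpan, Submodule.map_span_le]
    rintro _ ⟨j, hj, rfl⟩
    show D _ ∈ _
    rw [D.leibniz_units_zpow, smul_eq_mul, mul_comm]
    exact zsmul_mem (deriv_mul_val_zpow_mem_derivZpowSpan D u (by omega)) j
  exact hle ⟨a, ha, rfl⟩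

theorem apply_mem_derivZpowSpan_of_mem_zpowSpan_zero {a : A} (ha : a ∈ zpowSpan K u 0) :
    D a ∈ derivZpowSpan D u (-2) := by
  have hle : (zpowSpan K u 0).map D.toLinearMap ≤ derivZpowSpan D u (-2) := by
    rw [zpowSpan, Submodule.map_span_le]
    rintro _ ⟨j, hj, rfl⟩
    show D _ ∈ _
    obtain rfl | hj := hj.eq_or_lt
    · rw [zpow_zero, Units.val_one, D.map_one_eq_zero]
      exact zero_mem _
    · have := apply_mem_derivZpowSpan D u
        (val_zpow_mem_zpowSpan (K := K) (j := j) (t := -1) u (by omega))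
      rwa [show (-1 : ℤ) - 1 = -2 by norm_num] at this
  exact hle ⟨a, ha, rfl⟩

theorem apply_mem_zpowSpan (hsq : D u ^ 2 ∈ zpowSpan K u 1) (hdd : D (D u) ∈ zpowSpan K u 0)
    {t : ℤ} {a : A} (ha : a ∈ derivZpowSpan D u t) : D a ∈ zpowSpan K u t := by
  have hle : (derivZpowSpan D u t).map D.toLinearMap ≤ zpowSpan K u t := by
    rw [derivZpowSpan, Submodule.map_span_le]
    rintro _ ⟨j, hj, rfl⟩
    show D _ ∈ _
    have hleib :
        D (D u * ↑(u ^ j)) = j • (D u ^ 2 * ↑(u ^ (j - 1))) + D (D u) * ↑(u ^ j) := by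
      rw [D.leibniz, D.leibniz_units_zpow, smul_eq_mul, smul_eq_mul, smul_eq_mul, mul_smul_comm]
      ring
    rw [hleib]
    refine add_mem (zsmul_mem ?_ j) ?_
    · exact zpowSpan_mono u (by omega) (mul_mem_zpowSpan u hsq (val_zpow_mem_zpowSpan u le_rfl))
    · exact zpowSpan_mono u (by omega) (mul_mem_zpowSpan u hdd (val_zpow_mem_zpowSpan u le_rfl))
  exact hle ⟨a, ha, rfl⟩

theorem iterate_two_mul_mem_derivZpowSpan (hsq : D u ^ 2 ∈ zpowSpan K u 1)
    (hdd : D (D u) ∈ zpowSpan K u 0) (q : ℕ) {t : ℤ} {a : A}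
    (ha : a ∈ derivZpowSpan D u t) :
    D^[2 * q] a ∈ derivZpowSpan D u (t - q) := by
  induction q generalizing t a with
  | zero => simpa using ha
  | succ q ih =>
    rw [mul_add, mul_one, Function.iterate_add_apply]
    have h2 : D^[2] a ∈ derivZpowSpan D u (t - 1) :=
      apply_mem_derivZpowSpan D u (apply_mem_zpowSpan D u hsq hdd ha)
    exact derivZpowSpan_mono D u (by push_cast; omega) (ih h2)

theorem iterate_two_mul_add_one_mem_zpowSpan (hsq : D u ^ 2 ∈ zpowSpan K u 1)
    (hdd : D (D u) ∈ zpowSpan K u 0) (q : ℕ) {t : ℤ} {a : A}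
    (ha : a ∈ derivZpowSpan D u t) :
    D^[2 * q + 1] a ∈ zpowSpan K u (t - q) := by
  rw [Function.iterate_succ_apply']
  exact apply_mem_zpowSpan D u hsq hdd (iterate_two_mul_mem_derivZpowSpan D u hsq hdd q ha)

theorem ite_mul_iterate_mem_derivZpowSpan (hsq : D u ^ 2 ∈ zpowSpan K u 1)
    (hdd : D (D u) ∈ zpowSpan K u 0) {a B : A} (ha : a ∈ zpowSpan K u 0) {p : ℕ}
    (hB : B ∈ zpowSpan K u (if p = 0 then -2 else ((p : ℤ) - 1) / 2)) :
    (if Odd p then B else D u * B) * D^[p] a ∈ derivZpowSpan D u (-2) := by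
  have hDa := apply_mem_derivZpowSpan_of_mem_zpowSpan_zero D u ha
  rcases p with _ | p
  · rw [if_pos rfl] at hB
    rw [if_neg Nat.not_odd_zero, Function.iterate_zero_apply, mul_assoc]
    exact derivZpowSpan_mono D u (by norm_num)
      (deriv_mul_mem_derivZpowSpan D u (mul_mem_zpowSpan u hB ha))
  rw [if_neg p.succ_ne_zero] at hB
  rw [Function.iterate_succ_apply]
  obtain ⟨q, rfl | rfl⟩ := Nat.even_or_odd' p
  · have hB' : B ∈ zpowSpan K u q := zpowSpan_mono u (by push_cast; omega) hB
    rw [if_pos (odd_two_mul_add_one q)]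
    exact derivZpowSpan_mono D u (by omega)
      (mul_mem_derivZpowSpan D u hB' (iterate_two_mul_mem_derivZpowSpan D u hsq hdd q hDa))
  · have hB' : B ∈ zpowSpan K u q := zpowSpan_mono u (by push_cast; omega) hB
    rw [if_neg (Nat.not_odd_iff_even.mpr ⟨q + 1, by omega⟩), mul_assoc]
    exact derivZpowSpan_mono D u (by omega) (deriv_mul_mem_derivZpowSpan D u
      (mul_mem_zpowSpan u hB' (iterate_two_mul_add_one_mem_zpowSpan D u hsq hdd q hDa)))

end ZpowSpan

theorem derivZpowSpan_neg_two_le_map {K A : Type*} [Field K] [CharZero K] [CommRing A] [Algebra K A]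
    (D : Derivation K A A) (u : Aˣ) :
    derivZpowSpan D u (-2) ≤ (zpowSpan K u (-1)).map D.toLinearMap := by
  rw [derivZpowSpan, Submodule.span_le]
  rintro _ ⟨j, hj, rfl⟩
  have hj1 : ((j + 1 : ℤ) : K) ≠ 0 := Int.cast_ne_zero.mpr (by omega)
  refine ⟨((j + 1 : ℤ) : K)⁻¹ • ↑(u ^ (j + 1)),
    Submodule.smul_mem _ _ (val_zpow_mem_zpowSpan u (by omega)), ?_⟩
  show D (_ • _) = _
  rw [D.map_smul, D.leibniz_units_zpow, add_sub_cancel_right, ← Int.cast_smul_eq_zsmul K,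
    inv_smul_smul₀ hj1, smul_eq_mul, mul_comm]

theorem zpowSpan_zero_le_adjoin {K A : Type*} [CommRing K] [CommRing A] [Algebra K A] (u : Aˣ) :
    zpowSpan K u 0 ≤ Subalgebra.toSubmodule (Algebra.adjoin K {((u⁻¹ : Aˣ) : A)}) := by
  rw [zpowSpan, Submodule.span_le]
  rintro _ ⟨j, hj, rfl⟩
  have hj' : u ^ j = u⁻¹ ^ (-j).toNat := by
    rw [← zpow_natCast, Int.toNat_of_nonneg (by omega), inv_zpow, ← zpow_neg, neg_neg]
  rw [hj', Units.val_pow_eq_pow_val]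
  exact pow_mem (Algebra.subset_adjoin (Set.mem_singleton _)) _

namespace PowerSeries

variable {K : Type*} [Field K] (u : K⟦X⟧ˣ)

theorem C_mem_zpowSpan (c : K) {t : ℤ} (ht : 0 ≤ t) : C c ∈ zpowSpan K u t := by
  rw [← mul_one (C c), ← smul_eq_C_mul]
  exact Submodule.smul_mem _ c (one_mem_zpowSpan u ht)

theorem mem_zpowSpan_zero_of_derivative_mem [CharZero K] {g : K⟦X⟧}
    (h : derivative K g ∈ derivZpowSpan (derivative K) u (-2)) : g ∈ zpowSpan K u 0 := by
  obtain ⟨b, hb, hDb⟩ := derivZpowSpan_neg_two_le_map (derivative K) u h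
  have hg : g = b + C (constantCoeff (g - b)) := by
    apply derivative.ext
    · rw [map_add, derivative_C, add_zero]
      exact hDb.symm
    · rw [map_add, constantCoeff_C, map_sub, add_sub_cancel]
  rw [hg]
  exact add_mem (zpowSpan_mono u (by norm_num) hb) (C_mem_zpowSpan u _ le_rfl)

theorem derivative_sq_mem_zpowSpan {f : Polynomial K} (hf : f.degree ≤ 2)
    (hu : (u : K⟦X⟧) = f) : derivative K ↑u ^ 2 ∈ zpowSpan K u 1 := by
  rw [hu, derivative_coe, ← Polynomial.coe_pow, Polynomial.derivative_sq_of_degree_le_two hf,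
    Polynomial.coe_add, Polynomial.coe_mul, Polynomial.coe_C, Polynomial.coe_C, ← hu,
    ← smul_eq_C_mul]
  exact add_mem (Submodule.smul_mem _ _ (val_mem_zpowSpan u le_rfl))
    (C_mem_zpowSpan u _ zero_le_one)

theorem derivative_derivative_mem_zpowSpan {f : Polynomial K} (hf : f.degree ≤ 2)
    (hu : (u : K⟦X⟧) = f) : derivative K (derivative K ↑u) ∈ zpowSpan K u 0 := by
  rw [hu, derivative_coe, derivative_coe, Polynomial.derivative_derivative_of_degree_le_two hf,
    Polynomial.coe_C]
  exact C_mem_zpowSpan u _ le_rfl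

end PowerSeries

theorem admissible_degree_two_general
    (K : Type*) [Field K] [CharZero K]
    (f : Polynomial K) (hdeg : f.degree = 2)
    (u : K⟦X⟧ˣ) (hu : (u : K⟦X⟧) = (f : K⟦X⟧))
    (n N : ℕ) (A B : ℕ → ℕ → K⟦X⟧)
    (hAB : ∀ l p, A l p =
      if Odd p then B l p else ((Polynomial.derivative f : Polynomial K) : K⟦X⟧) * B l p)
    (hB0 : ∀ l ≤ n, B l 0 ∈ Submodule.span K
      {g : K⟦X⟧ | ∃ j : ℤ, j ≤ -2 ∧ g = ((u ^ j : K⟦X⟧ˣ) : K⟦X⟧)})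
    (hBp : ∀ l ≤ n, ∀ p : ℕ, 1 ≤ p → B l p ∈ Submodule.span K
      {g : K⟦X⟧ | ∃ j : ℤ, j ≤ ((p : ℤ) - 1) / 2 ∧ g = ((u ^ j : K⟦X⟧ˣ) : K⟦X⟧)})
    (R : ℤ → K⟦X⟧)
    (hRneg : ∀ j : ℤ, j < 0 → R j = 0)
    (hR0 : R 0 = 1)
    (hrec : ∀ m : ℤ, 1 ≤ m →
      PowerSeries.derivative K (R m) =
        ∑ l ∈ Finset.range (n + 1), ∑ p ∈ Finset.range N,
          A l p * (⇑(PowerSeries.derivative K))^[p] (R (m - 1 - (l : ℤ)))) :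
    ∀ m : ℤ, R m ∈
      Algebra.adjoin K {PowerSeries.X, ((u⁻¹ : K⟦X⟧ˣ) : K⟦X⟧)} := by
  have hsq := derivative_sq_mem_zpowSpan u hdeg.le hu
  have hdd := derivative_derivative_mem_zpowSpan u hdeg.le hu
  have hA : ∀ l p, A l p = if Odd p then B l p else derivative K ↑u * B l p := by
    intro l p
    rw [hAB, hu, derivative_coe]
  have hR : ∀ m, R m ∈ zpowSpan K u 0 := by
    intro m
    induction m using Int.strongRec (m := 0) with
    | lt m hm => exact hRneg m hm ▸ zero_mem _
    | ge m hm ih =>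
      obtain rfl | hm := hm.eq_or_lt
      · exact hR0 ▸ one_mem_zpowSpan u le_rfl
      apply mem_zpowSpan_zero_of_derivative_mem
      rw [hrec m hm]
      refine Submodule.sum_mem _ fun l hl => Submodule.sum_mem _ fun p _ => ?_
      have hln : l ≤ n := Nat.lt_succ_iff.mp (Finset.mem_range.mp hl)
      rw [hA]
      refine ite_mul_iterate_mem_derivZpowSpan _ u hsq hdd (ih _ (by omega)) ?_
      split_ifs with hp
      · exact hp ▸ hB0 l hln
      · exact hBp l hln p (by omega)
  exact fun m => Algebra.adjoin_mono (Set.subset_insert _ _) (zpowSpan_zero_le_adjoin u (hR m))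

/-- **Admissibility lemma for a degree-two polynomial `f`.**
Let `K` be a field of characteristic zero and `f ∈ K[x]` of degree two with `f(0) ≠ 0`, so
that `f` becomes a unit `u` of `K[[x]]` and `K[x][f⁻¹]` embeds into `K[[x]]`.  Let
`K_f ⊂ K[x][f⁻¹]` be the `K`-linear span of the integer powers of `f`, and for
`A = ∑ᵢ aᵢ fⁱ ∈ K_f` let `Ord(A)` be the largest `i` with `aᵢ ≠ 0`.  Fix `n ≥ 0` and
`A l p` for `0 ≤ l ≤ n`, `p ≥ 0`, vanishing for `p ≥ N`, of the form `A l p = B l p` for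
`p` odd and `A l p = (df/dx)·B l p` for `p` even, where `B l p ∈ K_f` satisfy
`Ord(B l 0) ≤ -2` and `Ord(B l p) ≤ ⌊(p-1)/2⌋` for `p ≥ 1` (expressed by membership in
the `K`-span of the corresponding powers of `f`).  Then for any sequence `(R m)` in
`K[[x]]` with `R 0 = 1`, `R j = 0` for `j < 0`, satisfying for all `m ≥ 1`
`dR_m/dx = ∑_{l=0}^{n} ∑_{p} A l p · (d/dx)^p R_{m-1-l}`, every `R m` lies in the
subring `K[x][f⁻¹]` of `K[[x]]`. -/
theorem admissible_degree_two
    (K : Type*) [Field K] [CharZero K]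
    (f : Polynomial K) (hdeg : f.degree = 2) (hf0 : Polynomial.eval 0 f ≠ 0)
    (u : K⟦X⟧ˣ) (hu : (u : K⟦X⟧) = (f : K⟦X⟧))
    (n N : ℕ) (A B : ℕ → ℕ → K⟦X⟧)
    (hAfin : ∀ l p, N ≤ p → A l p = 0)
    (hAB : ∀ l p, A l p =
      if Odd p then B l p else ((Polynomial.derivative f : Polynomial K) : K⟦X⟧) * B l p)
    (hB0 : ∀ l ≤ n, B l 0 ∈ Submodule.span K
      {g : K⟦X⟧ | ∃ j : ℤ, j ≤ -2 ∧ g = ((u ^ j : K⟦X⟧ˣ) : K⟦X⟧)})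
    (hBp : ∀ l ≤ n, ∀ p : ℕ, 1 ≤ p → B l p ∈ Submodule.span K
      {g : K⟦X⟧ | ∃ j : ℤ, j ≤ ((p : ℤ) - 1) / 2 ∧ g = ((u ^ j : K⟦X⟧ˣ) : K⟦X⟧)})
    (R : ℤ → K⟦X⟧)
    (hRneg : ∀ j : ℤ, j < 0 → R j = 0)
    (hR0 : R 0 = 1)
    (hrec : ∀ m : ℤ, 1 ≤ m →
      PowerSeries.derivative K (R m) =
        ∑ l ∈ Finset.range (n + 1), ∑ p ∈ Finset.range N,
          A l p * (⇑(PowerSeries.derivative K))^[p] (R (m - 1 - (l : ℤ)))) :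
    ∀ m : ℤ, R m ∈
      Algebra.adjoin K {PowerSeries.X, ((u⁻¹ : K⟦X⟧ˣ) : K⟦X⟧)} :=
  admissible_degree_two_general K f hdeg u hu n N A B hAB hB0 hBp R hRneg hR0 hrec
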